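/- Let ζ = e^{2πi/5}, Z₀ = [[ζ, ζ+ζ³],[ζ², ζ²+ζ]]⁻¹ · [[ζ², ζ⁴],[ζ⁴, ζ³]] ∈ 𝔥₂, and β = [[0,0,1,−1],[0,0,−1,0],[0,1,0,0],[1,1,0,0]]. Then β ∈ Sp₄(ℤ), and writing β = [[A,B],[C,D]] in 2×2 blocks, one has −conj(Z₀) = (A·Z₀ + B)(C·Z₀ + D)⁻¹, where conj denotes entrywise complex conjugation. -/

import Mathlib

open Matrix Complex

noncomputable section

/-- `e z = exp(2πiz)` -/
def e (z : ℂ) : ℂ := Complex.exp (2 * Real.pi * Complex.I * z)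

/-- The Siegel upper half-space: symmetric complex matrices with positive definite
imaginary part. -/
def SiegelHalfSpace (g : ℕ) : Set (Matrix (Fin g) (Fin g) ℂ) :=
  {Z | Z.IsSymm ∧ (Matrix.of fun i j => (Z i j).im).PosDef}

/-- The theta function `Θ(u, Z; r, s)`. -/
def Theta {g : ℕ} (u : Fin g → ℂ) (Z : Matrix (Fin g) (Fin g) ℂ)
    (r s : Fin g → ℝ) : ℂ :=
  ∑' x : Fin g → ℤ,
    e ((fun i => (x i : ℂ) + (r i : ℂ)) ⬝ᵥ Z.mulVec (fun i => (x i : ℂ) + (r i : ℂ)) / 2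
      + (fun i => (x i : ℂ) + (r i : ℂ)) ⬝ᵥ (u + fun i => (s i : ℂ)))

/-- The theta constant `Φ_{[r;s]}(Z)`. -/
def PhiTheta {g : ℕ} (r s : Fin g → ℝ) (Z : Matrix (Fin g) (Fin g) ℂ) : ℂ :=
  Theta 0 Z r s / Theta 0 Z 0 0

/-- The standard symplectic matrix `J`. -/
def Jmat (g : ℕ) : Matrix (Fin g ⊕ Fin g) (Fin g ⊕ Fin g) ℤ :=
  Matrix.fromBlocks 0 (-1) 1 0

/-- Membership in `Sp_{2g}(ℤ)`. -/
def IsSymplectic {g : ℕ} (γ : Matrix (Fin g ⊕ Fin g) (Fin g ⊕ Fin g) ℤ) : Prop :=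
  γᵀ * Jmat g * γ = Jmat g

/-- `ζ = e^{2πi/5}`. -/
def zeta5 : ℂ := Complex.exp (2 * Real.pi * Complex.I / 5)

/-- The CM point `Z₀` attached to `ℚ(ζ₅)`. -/
def Zcm : Matrix (Fin 2) (Fin 2) ℂ :=
  (!![zeta5, zeta5 + zeta5 ^ 3; zeta5 ^ 2, zeta5 ^ 2 + zeta5])⁻¹ *
    !![zeta5 ^ 2, zeta5 ^ 4; zeta5 ^ 4, zeta5 ^ 3]

/-- Cast an integer matrix to a complex matrix. -/
def czM {g : ℕ} (M : Matrix (Fin g) (Fin g) ℤ) : Matrix (Fin g) (Fin g) ℂ :=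
  M.map (Int.cast : ℤ → ℂ)

/-!
Clearing the inverse gives `Z₀ = [[ζ² - ζ³, -1 - ζ²], [-1 - ζ², -ζ⁴]]`, and `conj ζ = ζ⁴`.
Since `β` has zero diagonal blocks it acts by `Z ↦ B (C Z)⁻¹`, so the claim becomes
`B = -conj(Z₀) · C Z₀`, an identity in `ℤ[ζ]` modulo `1 + ζ + ζ² + ζ³ + ζ⁴`; the symplectic
condition reduces to `Bᵀ C = -1`.
-/

theorem Matrix.map_fin_two {α β : Type*} (f : α → β) (a b c d : α) :
    (!![a, b; c, d]).map f = !![f a, f b; f c, f d] :=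
  (eta_fin_two _).trans rfl

theorem Matrix.fin_two_eq_iff {α : Type*} {a b c d a' b' c' d' : α} :
    !![a, b; c, d] = !![a', b'; c', d'] ↔ a = a' ∧ b = b' ∧ c = c' ∧ d = d' := by
  simp [and_assoc]

theorem IsPrimitiveRoot.conj_eq_pow_pred {ζ : ℂ} {n : ℕ} (h : IsPrimitiveRoot ζ n)
    (hn : n ≠ 0) : starRingEnd ℂ ζ = ζ ^ (n - 1) := by
  rw [← Complex.inv_eq_conj (h.norm'_eq_one hn)]
  refine inv_eq_of_mul_eq_one_right ?_
  rw [← pow_succ', Nat.sub_add_cancel (Nat.one_le_iff_ne_zero.2 hn), h.pow_eq_one]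

theorem isSymplectic_fromBlocks_zero_zero_iff {g : ℕ} {B C : Matrix (Fin g) (Fin g) ℤ} :
    IsSymplectic (fromBlocks 0 B C 0) ↔ Bᵀ * C = -1 := by
  rw [IsSymplectic, Jmat, fromBlocks_transpose]
  simp only [fromBlocks_multiply, fromBlocks_inj, transpose_zero, mul_zero, mul_one, zero_add,
    mul_neg, neg_zero, add_zero, zero_mul, neg_mul, and_true, true_and]
  refine ⟨fun h => neg_eq_iff_eq_neg.1 h.2, fun h => ⟨?_, by rw [h, neg_neg]⟩⟩
  rw [← transpose_transpose (Cᵀ * B), transpose_mul, transpose_transpose, h, transpose_neg,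
    transpose_one]

theorem czM_zero {g : ℕ} : czM (0 : Matrix (Fin g) (Fin g) ℤ) = 0 :=
  Matrix.map_zero _ Int.cast_zero

theorem isPrimitiveRoot_zeta5 : IsPrimitiveRoot zeta5 5 := by
  simpa [zeta5] using Complex.isPrimitiveRoot_exp 5 (by norm_num)

theorem zeta5_geom_sum : zeta5 ^ 4 + zeta5 ^ 3 + zeta5 ^ 2 + zeta5 + 1 = 0 := by
  simpa [Finset.sum_range_succ, add_comm, add_left_comm, add_assoc] using
    isPrimitiveRoot_zeta5.geom_sum_eq_zero (by norm_num)

theorem conj_zeta5 : starRingEnd ℂ zeta5 = zeta5 ^ 4 :=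
  isPrimitiveRoot_zeta5.conj_eq_pow_pred (by norm_num)

theorem Zcm_eq :
    Zcm = !![zeta5 ^ 2 - zeta5 ^ 3, -1 - zeta5 ^ 2; -1 - zeta5 ^ 2, -zeta5 ^ 4] := by
  have hdet : (!![zeta5, zeta5 + zeta5 ^ 3; zeta5 ^ 2, zeta5 ^ 2 + zeta5]).det
      = zeta5 ^ 2 - 1 := by
    rw [det_fin_two_of]
    grind [isPrimitiveRoot_zeta5.pow_eq_one]
  have hsq : zeta5 ^ 2 ≠ 1 :=
    isPrimitiveRoot_zeta5.pow_ne_one_of_pos_of_lt two_ne_zero (by norm_num)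
  have := invertibleOfIsUnitDet _ (by rwa [hdet, isUnit_iff_ne_zero, sub_ne_zero])
  rw [Zcm, inv_mul_eq_iff_eq_mul_of_invertible, mul_fin_two]
  refine fin_two_eq_iff.2 ⟨?_, ?_, ?_, ?_⟩ <;> grind [zeta5_geom_sum]

theorem conj_Zcm : Zcm.map (starRingEnd ℂ)
    = !![zeta5 ^ 3 - zeta5 ^ 2, -1 - zeta5 ^ 3; -1 - zeta5 ^ 3, -zeta5] := by
  rw [Zcm_eq, map_fin_two]
  simp only [map_sub, map_neg, map_one, map_pow, conj_zeta5]
  refine fin_two_eq_iff.2 ⟨?_, ?_, ?_, ?_⟩ <;> grind [isPrimitiveRoot_zeta5.pow_eq_one]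

theorem czM_mul_Zcm : czM !![0, 1; 1, 1] * Zcm
    = !![-1 - zeta5 ^ 2, -zeta5 ^ 4; -1 - zeta5 ^ 3, -1 - zeta5 ^ 2 - zeta5 ^ 4] := by
  rw [czM, map_fin_two, Zcm_eq, mul_fin_two]
  push_cast
  refine fin_two_eq_iff.2 ⟨?_, ?_, ?_, ?_⟩ <;> ring

theorem det_czM_mul_Zcm : (czM !![0, 1; 1, 1] * Zcm).det = -zeta5 ^ 3 := by
  rw [czM_mul_Zcm, det_fin_two_of]
  grind [zeta5_geom_sum]

/-- The matrix `β = [[0,0,1,−1],[0,0,−1,0],[0,1,0,0],[1,1,0,0]]` is symplectic and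
sends `Z₀` to `−conj(Z₀)`. -/
theorem beta_symplectic_and_sends_Zcm :
    IsSymplectic (Matrix.fromBlocks (0 : Matrix (Fin 2) (Fin 2) ℤ) !![1, -1; -1, 0]
      !![0, 1; 1, 1] (0 : Matrix (Fin 2) (Fin 2) ℤ)) ∧
    -(Zcm.map (starRingEnd ℂ))
      = (czM (0 : Matrix (Fin 2) (Fin 2) ℤ) * Zcm + czM !![1, -1; -1, 0]) *
        (czM !![0, 1; 1, 1] * Zcm + czM (0 : Matrix (Fin 2) (Fin 2) ℤ))⁻¹ := by
  refine ⟨isSymplectic_fromBlocks_zero_zero_iff.2 (by decide), ?_⟩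
  simp only [czM_zero, zero_mul, zero_add, add_zero]
  have := invertibleOfIsUnitDet _ <| isUnit_iff_ne_zero.2 <| det_czM_mul_Zcm ▸
    neg_ne_zero.2 (pow_ne_zero 3 (isPrimitiveRoot_zeta5.ne_zero (by norm_num)))
  rw [eq_comm, mul_inv_eq_iff_eq_mul_of_invertible, conj_Zcm, czM_mul_Zcm, czM, map_fin_two]
  simp only [neg_of, neg_cons, neg_empty, mul_fin_two]
  push_cast
  refine fin_two_eq_iff.2 ⟨?_, ?_, ?_, ?_⟩ <;> grind [zeta5_geom_sum]
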